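/- arXiv:2004.06948 — 2 statements merged into one kernel-verified Lean document; each statement's English description precedes it below -/
import Mathlib

section
/- Let m be a finite Borel measure on [0,1] and let (P_k) be a sequence of partitions of [0,1] with mesh tending to 0, each with strictly positive m-mass on every partition interval. Let π_k be the conditional-averaging projection and E_k the piecewise-constant extension associated with P_k. Then for every u ∈ C([0,1]), ‖π_k u‖_{L²(m_k)} → ‖u‖_{L²(m)} as k → ∞, where m_k is the induced point measure on the partition points. -/
/-!
On each cell `s` of the partition, with `A` the `m`-average of `u` over `s`, one has the
Pythagorean identity `∫_s (u - A)² = ∫_s u² - m(s) A²`. Summing over the cells, the squared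
`L²(m_k)`-norm of `π_k u` falls short of `∫_{[0,1)} u²` by `∑ ∫_s (u - A)²`, which is at most
`ω² m([0,1))` when `ω` bounds the oscillation of `u` on every cell; by uniform continuity of `u`
and the mesh condition, `ω` can be taken arbitrarily small. Since `m {1} = 0`, integrating over
`[0,1)` or `[0,1]` is the same.
-/

open MeasureTheory Set Filter

section

variable {α : Type*} [MeasurableSpace α] {μ : Measure α} [IsFiniteMeasure μ] {s : Set α} {f : α → ℝ}

lemma setIntegral_sub_setAverage_sq (hf : IntegrableOn f s μ)
    (hf2 : IntegrableOn (fun x => f x ^ 2) s μ) :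
    ∫ x in s, (f x - ⨍ y in s, f y ∂μ) ^ 2 ∂μ
      = ∫ x in s, f x ^ 2 ∂μ - μ.real s * (⨍ y in s, f y ∂μ) ^ 2 := by
  set A := ⨍ y in s, f y ∂μ
  have hfA : ∫ x in s, f x ∂μ = μ.real s * A :=
    (measure_smul_setAverage f (measure_ne_top μ s)).symm
  have hexp : (fun x => (f x - A) ^ 2) = fun x => f x ^ 2 - (2 * A * f x - A ^ 2) := by
    ext x; ring
  have hlin : IntegrableOn (fun x => 2 * A * f x) s μ := hf.const_mul _
  have hconst : IntegrableOn (fun _ => A ^ 2) s μ := integrableOn_const (measure_ne_top μ s)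
  have hdiff : IntegrableOn (fun x => 2 * A * f x - A ^ 2) s μ := hlin.sub hconst
  rw [hexp, integral_sub hf2 hdiff, integral_sub hlin hconst, integral_const_mul,
    hfA, setIntegral_const, smul_eq_mul]
  ring

lemma setIntegral_sub_setAverage_sq_le (hs : MeasurableSet s) (hf : IntegrableOn f s μ) {η : ℝ}
    (hosc : ∀ x ∈ s, ∀ y ∈ s, dist (f x) (f y) ≤ η) :
    ∫ x in s, (f x - ⨍ y in s, f y ∂μ) ^ 2 ∂μ ≤ η ^ 2 * μ.real s := by
  by_cases h0 : μ s = 0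
  · simp [Measure.restrict_eq_zero.mpr h0, measureReal_def, h0]
  set A := ⨍ y in s, f y ∂μ
  have hclose : ∀ x ∈ s, |f x - A| ≤ η := fun x hx => by
    have : A ∈ Metric.closedBall (f x) η :=
      (convex_closedBall (f x) η).set_average_mem Metric.isClosed_closedBall h0 (measure_ne_top μ s)
        ((ae_restrict_iff' hs).mpr (Eventually.of_forall fun y hy => hosc y hy x hx)) hf
    rwa [Metric.mem_closedBall, Real.dist_eq, abs_sub_comm] at this
  calc ∫ x in s, (f x - A) ^ 2 ∂μ ≤ ‖∫ x in s, (f x - A) ^ 2 ∂μ‖ := le_abs_self _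
    _ ≤ η ^ 2 * μ.real s := norm_setIntegral_le_of_norm_le_const (measure_lt_top μ s) fun x hx => by
      rw [Real.norm_eq_abs, abs_pow]
      exact pow_le_pow_left₀ (abs_nonneg _) (hclose x hx) 2

end

lemma sum_setIntegral_Ico_castSucc_succ {E : Type*} [NormedAddCommGroup E] [NormedSpace ℝ E]
    {μ : Measure ℝ} {f : ℝ → E} {N : ℕ} (b : Fin (N + 1) → ℝ) (hb : Monotone b)
    (hf : IntegrableOn f (Ico (b 0) (b (Fin.last N))) μ) :
    ∑ i : Fin N, ∫ x in Ico (b i.castSucc) (b i.succ), f x ∂μ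
      = ∫ x in Ico (b 0) (b (Fin.last N)), f x ∂μ := by
  induction N with
  | zero => simp
  | succ N ih =>
    have hle : b 0 ≤ b (Fin.last N).castSucc := hb (Fin.zero_le _)
    have hle' : b (Fin.last N).castSucc ≤ b (Fin.last (N + 1)) := hb (Fin.le_last _)
    have hunion := Ico_union_Ico_eq_Ico hle hle'
    rw [Fin.sum_univ_castSucc]
    simp only [Fin.succ_castSucc, Fin.succ_last]
    have hinit := ih (b ∘ Fin.castSucc) (hb.comp Fin.strictMono_castSucc.monotone)
      (hf.mono_set (hunion ▸ subset_union_left))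
    simp only [Function.comp_apply, Fin.castSucc_zero] at hinit
    rw [hinit, ← setIntegral_union Ico_disjoint_Ico_same measurableSet_Ico
      (hf.mono_set (hunion ▸ subset_union_left)) (hf.mono_set (hunion ▸ subset_union_right)),
      hunion]

lemma Ico_castSucc_succ_subset {N : ℕ} {b : Fin (N + 1) → ℝ} (hb : Monotone b) (i : Fin N) :
    Ico (b i.castSucc) (b i.succ) ⊆ Ico (b 0) (b (Fin.last N)) :=
  Ico_subset_Ico (hb (Fin.zero_le _)) (hb (Fin.le_last _))

lemma abs_sum_measureReal_mul_setAverage_sq_sub_le {μ : Measure ℝ} [IsFiniteMeasure μ]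
    {f : ℝ → ℝ} {N : ℕ} (b : Fin (N + 1) → ℝ) (hb : Monotone b)
    (hf : IntegrableOn f (Ico (b 0) (b (Fin.last N))) μ)
    (hf2 : IntegrableOn (fun x => f x ^ 2) (Ico (b 0) (b (Fin.last N))) μ) {η : ℝ}
    (hosc : ∀ i : Fin N, ∀ x ∈ Ico (b i.castSucc) (b i.succ), ∀ y ∈ Ico (b i.castSucc) (b i.succ),
      dist (f x) (f y) ≤ η) :
    |∑ i : Fin N, μ.real (Ico (b i.castSucc) (b i.succ))
        * (⨍ x in Ico (b i.castSucc) (b i.succ), f x ∂μ) ^ 2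
      - ∫ x in Ico (b 0) (b (Fin.last N)), f x ^ 2 ∂μ|
      ≤ η ^ 2 * μ.real (Ico (b 0) (b (Fin.last N))) := by
  set s : Fin N → Set ℝ := fun i => Ico (b i.castSucc) (b i.succ)
  set V : Fin N → ℝ := fun i => ∫ x in s i, (f x - ⨍ y in s i, f y ∂μ) ^ 2 ∂μ
  have hsum_measure : ∑ i, μ.real (s i) = μ.real (Ico (b 0) (b (Fin.last N))) := by
    simpa using sum_setIntegral_Ico_castSucc_succ (μ := μ) (f := fun _ => (1 : ℝ)) b hb
      (integrableOn_const (measure_ne_top μ _))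
  have hdefect : ∑ i, μ.real (s i) * (⨍ x in s i, f x ∂μ) ^ 2
      - ∫ x in Ico (b 0) (b (Fin.last N)), f x ^ 2 ∂μ = -∑ i, V i := by
    rw [← sum_setIntegral_Ico_castSucc_succ b hb hf2, ← Finset.sum_sub_distrib,
      ← Finset.sum_neg_distrib]
    refine Finset.sum_congr rfl fun i _ => ?_
    dsimp only [s, V]
    rw [setIntegral_sub_setAverage_sq (hf.mono_set (Ico_castSucc_succ_subset hb i))
      (hf2.mono_set (Ico_castSucc_succ_subset hb i))]
    ring
  have hV_nonneg : ∀ i, 0 ≤ V i := fun i =>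
    setIntegral_nonneg measurableSet_Ico fun _ _ => sq_nonneg _
  rw [hdefect, abs_neg, abs_of_nonneg (Finset.sum_nonneg fun i _ => hV_nonneg i), ← hsum_measure,
    Finset.mul_sum]
  exact Finset.sum_le_sum fun i _ => setIntegral_sub_setAverage_sq_le measurableSet_Ico
    (hf.mono_set (Ico_castSucc_succ_subset hb i)) (hosc i)

theorem stmt_7_general (m : Measure ℝ) [IsFiniteMeasure m] (hm1 : m {(1:ℝ)} = 0)
    (n : ℕ → ℕ)
    (a : ∀ k, Fin (n k + 1) → ℝ)
    (ha0 : ∀ k, a k 0 = 0) (ha1 : ∀ k, a k (Fin.last (n k)) = 1)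
    (hamono : ∀ k, StrictMono (a k))
    (hmesh : ∀ ε > (0:ℝ), ∃ K, ∀ k ≥ K, ∀ i : Fin (n k),
      a k i.succ - a k i.castSucc < ε)
    (u : ℝ → ℝ) (hu : ContinuousOn u (Set.Icc (0:ℝ) 1)) :
    Tendsto
      (fun k => Real.sqrt (∑ i : Fin (n k),
        (m (Set.Ico (a k i.castSucc) (a k i.succ))).toReal *
          ((m (Set.Ico (a k i.castSucc) (a k i.succ))).toReal⁻¹ *
              ∫ x in Set.Ico (a k i.castSucc) (a k i.succ), u x ∂m) ^ 2))
      atTop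
      (nhds (Real.sqrt (∫ x in Set.Icc (0:ℝ) 1, (u x) ^ 2 ∂m))) := by
  have hcell : ∀ s : Set ℝ, (m s).toReal * ((m s).toReal⁻¹ * ∫ x in s, u x ∂m) ^ 2
      = m.real s * (⨍ x in s, u x ∂m) ^ 2 := fun s => by rw [setAverage_eq, smul_eq_mul]; rfl
  simp only [hcell, integral_Icc_eq_integral_Ico' hm1]
  refine Tendsto.sqrt (Metric.tendsto_atTop.mpr fun ε hε => ?_)
  set C := m.real (Ico (0 : ℝ) 1)
  obtain ⟨η, hη, hηε⟩ : ∃ η > 0, η ^ 2 * C < ε := ⟨√(ε / (C + 1)), by positivity, by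
    rw [Real.sq_sqrt (by positivity), div_mul_eq_mul_div, div_lt_iff₀ (by positivity)]
    nlinarith⟩
  obtain ⟨δ, hδ, hclose⟩ := Metric.uniformContinuousOn_iff_le.mp
    (isCompact_Icc.uniformContinuousOn_of_continuous hu) η hη
  obtain ⟨K, hK⟩ := hmesh δ hδ
  refine ⟨K, fun k hk => ?_⟩
  have hcell_sub : ∀ i : Fin (n k), Ico (a k i.castSucc) (a k i.succ) ⊆ Icc 0 1 := fun i => by
    simpa [ha0, ha1] using
      (Ico_castSucc_succ_subset (hamono k).monotone i).trans Ico_subset_Icc_self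
  have hint : IntegrableOn u (Ico (a k 0) (a k (Fin.last (n k)))) m := by
    rw [ha0, ha1]
    exact (hu.integrableOn_compact isCompact_Icc).mono_set Ico_subset_Icc_self
  have hint2 : IntegrableOn (fun x => u x ^ 2) (Ico (a k 0) (a k (Fin.last (n k)))) m := by
    rw [ha0, ha1]
    exact ((hu.pow 2).integrableOn_compact isCompact_Icc).mono_set Ico_subset_Icc_self
  have hbound := abs_sum_measureReal_mul_setAverage_sq_sub_le (a k) (hamono k).monotone hint hint2
    fun i x hx y hy => hclose x (hcell_sub i hx) y (hcell_sub i hy) (by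
      rw [Real.dist_eq, abs_le]
      have := hK k hk i
      constructor <;> linarith [hx.1, hx.2, hy.1, hy.2])
  rw [ha0, ha1] at hbound
  exact hbound.trans_lt hηε

/-- along a sequence of partitions with mesh tending to 0,
`‖π_k u‖_{L²(m_k)} → ‖u‖_{L²(m)}` for every continuous `u` on `[0,1]`. -/
theorem stmt_7 (m : Measure ℝ) [IsFiniteMeasure m] (hm1 : m {(1:ℝ)} = 0)
    (n : ℕ → ℕ) (hn : ∀ k, 0 < n k)
    (a : ∀ k, Fin (n k + 1) → ℝ)
    (ha0 : ∀ k, a k 0 = 0) (ha1 : ∀ k, a k (Fin.last (n k)) = 1)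
    (hamono : ∀ k, StrictMono (a k))
    (hpos : ∀ k (i : Fin (n k)), m (Set.Ico (a k i.castSucc) (a k i.succ)) ≠ 0)
    (hmesh : ∀ ε > (0:ℝ), ∃ K, ∀ k ≥ K, ∀ i : Fin (n k),
      a k i.succ - a k i.castSucc < ε)
    (u : ℝ → ℝ) (hu : ContinuousOn u (Set.Icc (0:ℝ) 1)) :
    Tendsto
      (fun k => Real.sqrt (∑ i : Fin (n k),
        (m (Set.Ico (a k i.castSucc) (a k i.succ))).toReal *
          ((m (Set.Ico (a k i.castSucc) (a k i.succ))).toReal⁻¹ *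
              ∫ x in Set.Ico (a k i.castSucc) (a k i.succ), u x ∂m) ^ 2))
      atTop
      (nhds (Real.sqrt (∫ x in Set.Icc (0:ℝ) 1, (u x) ^ 2 ∂m))) :=
  stmt_7_general m hm1 n a ha0 ha1 hamono hmesh u hu
end

section
/- Let s : [0,1] → ℝ be continuous and strictly increasing, fix a partition with points a_1 < ... < a_{n+1}, and let u_n be an s-linear interpolation function on [0,1] (s-affine on each partition interval) such that ∫_{[0,1]} (du_n/ds)² dμ_s ≤ M². Let φ_n be the restriction of u_n to the partition points, extended to a step function E_n φ_n(x) = φ_n(a_i) on [a_i, a_{i+1}). Then for all x ∈ [a_i, a_{i+1}], |u_n(x) − E_n φ_n(x)| ≤ M (s(x) − s(a_i))^{1/2}, and consequently for any φ ∈ L²([0,1], m) (m a finite Borel measure), |∫ φ (u_n − E_n φ_n) dm| ≤ M ‖φ‖_{L¹(m)} · (sup_i (s(a_{i+1}) − s(a_i)))^{1/2}. -/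
/-!
On the `i`-th interval `u_n(x) - u_n(a_i) = c_i (s(x) - s(a_i))`. Since `s` is continuous,
`μ_s` has no atoms, so `g²` is integrable on `[0, 1]` and its integral over `(a_i, a_{i+1})` is
`c_i² Δs_i`; the energy bound therefore gives `c_i² Δs_i ≤ M²`, whence
`|c_i t| = √(c_i² t) √t ≤ M √t` for `0 ≤ t ≤ Δs_i`. The integral bound is this pointwise bound
integrated against `|φ|`, after discarding the point `1`, which `m` does not charge.
-/

open MeasureTheory Set

theorem Fin.exists_mem_Ico_castSucc_succ {α : Type*} [LinearOrder α] {n : ℕ}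
    (a : Fin (n + 1) → α) {x : α} (h0 : a 0 ≤ x) (h1 : x < a (Fin.last n)) :
    ∃ i : Fin n, x ∈ Ico (a i.castSucc) (a i.succ) := by
  classical
  -- `i.succ` is the first index with `x < a i.succ`.
  have hex : ∃ j, x < a j := ⟨_, h1⟩
  obtain ⟨i, hi⟩ := Fin.exists_succ_eq_of_ne_zero (x := Fin.find _ hex) fun h =>
    (Fin.find_spec hex).not_ge (h ▸ h0)
  refine ⟨i, not_lt.1 fun hlt => ?_, hi ▸ Fin.find_spec hex⟩
  exact Fin.find_min hex (hi ▸ Fin.castSucc_lt_succ) hlt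

namespace StieltjesFunction

variable (s : StieltjesFunction ℝ) (hs : Continuous s)
include hs

theorem nullSingletonClass_of_continuous : NullSingletonClass s.measure :=
  ⟨fun x => by rw [s.measure_singleton, hs.continuousWithinAt.leftLim_eq, sub_self,
    ENNReal.ofReal_zero]⟩

theorem measureReal_Ioo_of_continuous {x y : ℝ} (hxy : x ≤ y) :
    s.measure.real (Ioo x y) = s y - s x := by
  rw [measureReal_def, s.measure_Ioo, hs.continuousWithinAt.leftLim_eq,
    ENNReal.toReal_ofReal (sub_nonneg.2 (s.mono hxy))]

end StieltjesFunction

section PiecewiseConstant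

variable (s : StieltjesFunction ℝ) (hs : Continuous s) {n : ℕ} (a : Fin (n + 1) → ℝ)
  (g : ℝ → ℝ) (c : Fin n → ℝ)
  (hg : ∀ i : Fin n, ∀ x ∈ Ioo (a i.castSucc) (a i.succ), g x = c i)
include hs hg

theorem integrableOn_sq_of_eqOn_Ioo :
    IntegrableOn (fun y => g y ^ 2) (Icc (a 0) (a (Fin.last n))) s.measure := by
  have := s.nullSingletonClass_of_continuous hs
  have hcover : Ico (a 0) (a (Fin.last n)) ⊆ ⋃ i : Fin n, Ico (a i.castSucc) (a i.succ) :=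
    fun x hx => mem_iUnion.2 (Fin.exists_mem_Ico_castSucc_succ a hx.1 hx.2)
  refine (integrableOn_Icc_iff_integrableOn_Ico).2 (IntegrableOn.mono_set ?_ hcover)
  refine integrableOn_finite_iUnion.2 fun i => (integrableOn_Ico_iff_integrableOn_Ioo).2 ?_
  refine (integrableOn_const (C := c i ^ 2) ?_).congr_fun (fun x hx => ?_) measurableSet_Ioo
  · rw [s.measure_Ioo]; exact ENNReal.ofReal_ne_top
  · simp only [hg i x hx]

theorem sq_mul_sub_le_setIntegral_sq (hamono : Monotone a) (i : Fin n) :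
    c i ^ 2 * (s (a i.succ) - s (a i.castSucc)) ≤
      ∫ y in Icc (a 0) (a (Fin.last n)), g y ^ 2 ∂s.measure := by
  have hpiece : ∫ y in Ioo (a i.castSucc) (a i.succ), g y ^ 2 ∂s.measure =
      c i ^ 2 * (s (a i.succ) - s (a i.castSucc)) := by
    rw [setIntegral_congr_fun measurableSet_Ioo (g := fun _ => c i ^ 2)
        (fun x hx => by simp only [hg i x hx]),
      setIntegral_const, s.measureReal_Ioo_of_continuous hs
        (hamono i.castSucc_le_succ), smul_eq_mul, mul_comm]
  rw [← hpiece]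
  refine setIntegral_mono_set (integrableOn_sq_of_eqOn_Ioo s hs a g c hg)
    (.of_forall fun y => sq_nonneg _) (.of_forall ?_)
  exact Ioo_subset_Icc_self.trans (Icc_subset_Icc (hamono (Fin.zero_le _))
    (hamono (Fin.le_last _)))

end PiecewiseConstant

theorem abs_mul_le_mul_sqrt {c t Δ M : ℝ} (hM : 0 ≤ M) (ht : 0 ≤ t) (htΔ : t ≤ Δ)
    (h : c ^ 2 * Δ ≤ M ^ 2) : |c * t| ≤ M * √t := by
  have hct : √(c ^ 2 * t) ≤ M :=
    (Real.sqrt_le_left hM).2 ((mul_le_mul_of_nonneg_left htΔ (sq_nonneg c)).trans h)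
  calc |c * t| = √(c ^ 2 * t) * √t := by
        rw [Real.sqrt_mul (sq_nonneg c), Real.sqrt_sq_eq_abs, mul_assoc, Real.mul_self_sqrt ht,
          abs_mul, abs_of_nonneg ht]
    _ ≤ M * √t := by gcongr

theorem abs_setIntegral_mul_le {α : Type*} [MeasurableSpace α] {m : Measure α} {S : Set α}
    (hS : MeasurableSet S) {φ f : α → ℝ} (hφ : IntegrableOn φ S m) {C : ℝ}
    (hf : ∀ x ∈ S, |f x| ≤ C) :
    |∫ x in S, φ x * f x ∂m| ≤ C * ∫ x in S, |φ x| ∂m := by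
  rw [← integral_const_mul, ← Real.norm_eq_abs]
  refine norm_integral_le_of_norm_le (hφ.abs.const_mul C) ?_
  filter_upwards [ae_restrict_mem hS] with x hx
  rw [Real.norm_eq_abs, abs_mul, mul_comm C]
  exact mul_le_mul_of_nonneg_left (hf x hx) (abs_nonneg _)

theorem stmt_9_general (s : StieltjesFunction ℝ) (hs : Continuous s)
    (n : ℕ) (hn : 0 < n) (a : Fin (n + 1) → ℝ)
    (ha0 : a 0 = 0) (halast : a (Fin.last n) = 1) (hamono : StrictMono a)
    (un g : ℝ → ℝ) (c : Fin n → ℝ) (M : ℝ) (hM : 0 ≤ M)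
    -- un is s-affine with slope c i on the i-th interval, with s-derivative g
    (hun : ∀ i : Fin n, ∀ x ∈ Set.Icc (a i.castSucc) (a i.succ),
      un x = un (a i.castSucc) + c i * (s x - s (a i.castSucc)))
    (hg : ∀ i : Fin n, ∀ x ∈ Set.Ioo (a i.castSucc) (a i.succ), g x = c i)
    (henergy : ∫ y in Set.Icc (0:ℝ) 1, (g y) ^ 2 ∂s.measure ≤ M ^ 2)
    -- Eφ is the step extension of the restriction of un to the partition points
    (Eφ : ℝ → ℝ)
    (hEφ : ∀ i : Fin n, ∀ x ∈ Set.Ico (a i.castSucc) (a i.succ), Eφ x = un (a i.castSucc))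
    (m : Measure ℝ) (hm1 : m {(1:ℝ)} = 0)
    (φ : ℝ → ℝ) (hφ : IntegrableOn φ (Set.Icc (0:ℝ) 1) m) :
    (∀ i : Fin n, ∀ x ∈ Set.Icc (a i.castSucc) (a i.succ),
      |un x - un (a i.castSucc)| ≤ M * Real.sqrt (s x - s (a i.castSucc))) ∧
    |∫ x in Set.Icc (0:ℝ) 1, φ x * (un x - Eφ x) ∂m| ≤
      M * (∫ x in Set.Icc (0:ℝ) 1, |φ x| ∂m) *
        Real.sqrt (Finset.univ.sup'
          (Finset.univ_nonempty_iff.mpr ⟨⟨0, hn⟩⟩)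
          (fun i : Fin n => s (a i.succ) - s (a i.castSucc))) := by
  have hpointwise : ∀ i : Fin n, ∀ x ∈ Icc (a i.castSucc) (a i.succ),
      |un x - un (a i.castSucc)| ≤ M * √(s x - s (a i.castSucc)) := by
    intro i x hx
    rw [hun i x hx, add_sub_cancel_left]
    refine abs_mul_le_mul_sqrt hM (sub_nonneg.2 (s.mono hx.1))
      (sub_le_sub_right (s.mono hx.2) _) ?_
    have hslope := sq_mul_sub_le_setIntegral_sq s hs a g c hg hamono.monotone i
    rw [ha0, halast] at hslope
    exact hslope.trans henergy
  refine ⟨hpointwise, ?_⟩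
  rw [setIntegral_congr_set (Ico_ae_eq_Icc' hm1).symm,
    setIntegral_congr_set (Ico_ae_eq_Icc' hm1).symm, mul_right_comm]
  refine abs_setIntegral_mul_le measurableSet_Ico (hφ.mono_set Ico_subset_Icc_self)
    fun x hx => ?_
  obtain ⟨i, hi⟩ := Fin.exists_mem_Ico_castSucc_succ a (ha0 ▸ hx.1) (halast ▸ hx.2)
  rw [hEφ i x hi]
  refine (hpointwise i x (Ico_subset_Icc_self hi)).trans ?_
  gcongr
  exact (sub_le_sub_right (s.mono hi.2.le) _).trans
    (Finset.le_sup' (fun j : Fin n => s (a j.succ) - s (a j.castSucc)) (Finset.mem_univ i))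

/-- an s-affine function `un` with energy bound `∫ (dun/ds)² dμ_s ≤ M²`
differs from its step extension `Eφ` (piecewise constant value at the left partition
point) by at most `M √(s(x) − s(a_i))` on each partition interval; consequently the
pairing with any `φ ∈ L¹(m)` is bounded by `M ‖φ‖_{L¹} (sup_i Δs_i)^{1/2}`. -/
theorem stmt_9 (s : StieltjesFunction ℝ) (hs : Continuous s)
    (hmono : StrictMonoOn s (Set.Icc (0:ℝ) 1))
    (n : ℕ) (hn : 0 < n) (a : Fin (n + 1) → ℝ)
    (ha0 : a 0 = 0) (halast : a (Fin.last n) = 1) (hamono : StrictMono a)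
    (un g : ℝ → ℝ) (c : Fin n → ℝ) (M : ℝ) (hM : 0 ≤ M)
    -- un is s-affine with slope c i on the i-th interval, with s-derivative g
    (hun : ∀ i : Fin n, ∀ x ∈ Set.Icc (a i.castSucc) (a i.succ),
      un x = un (a i.castSucc) + c i * (s x - s (a i.castSucc)))
    (hg : ∀ i : Fin n, ∀ x ∈ Set.Ioo (a i.castSucc) (a i.succ), g x = c i)
    (henergy : ∫ y in Set.Icc (0:ℝ) 1, (g y) ^ 2 ∂s.measure ≤ M ^ 2)
    -- Eφ is the step extension of the restriction of un to the partition points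
    (Eφ : ℝ → ℝ)
    (hEφ : ∀ i : Fin n, ∀ x ∈ Set.Ico (a i.castSucc) (a i.succ), Eφ x = un (a i.castSucc))
    (m : Measure ℝ) [IsFiniteMeasure m] (hm1 : m {(1:ℝ)} = 0)
    (φ : ℝ → ℝ) (hφ : IntegrableOn φ (Set.Icc (0:ℝ) 1) m) :
    (∀ i : Fin n, ∀ x ∈ Set.Icc (a i.castSucc) (a i.succ),
      |un x - un (a i.castSucc)| ≤ M * Real.sqrt (s x - s (a i.castSucc))) ∧
    |∫ x in Set.Icc (0:ℝ) 1, φ x * (un x - Eφ x) ∂m| ≤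
      M * (∫ x in Set.Icc (0:ℝ) 1, |φ x| ∂m) *
        Real.sqrt (Finset.univ.sup'
          (Finset.univ_nonempty_iff.mpr ⟨⟨0, hn⟩⟩)
          (fun i : Fin n => s (a i.succ) - s (a i.castSucc))) :=
  stmt_9_general s hs n hn a ha0 halast hamono un g c M hM hun hg henergy Eφ hEφ m hm1 φ hφ
end
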